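/- For every real δ > √e, every real ε > 0, and every positive integer k, writing K_j = K_j(πεk), the tangential Stokes slender-body PDE eigenvalue λᵗ = 4π²εk·K₁² / (2K₀K₁ + πεk·(K₀² − K₁²)) and the δ-regularized tangential eigenvalue λ^{δ,t} = 4π/(−1 + 2·log δ + 2·K₀(δπεk)) satisfy |λᵗ − λ^{δ,t}| ≤ 4π·(1/2 + 1/(−1 + 2·log δ) + πεk). -/

import Mathlib

open Real

/-- Modified Bessel function of the second kind of order `j`:
`K_j(z) = ∫₀^∞ exp (−z cosh t) * cosh (j t) dt`. -/
noncomputable def besselK (j : ℕ) (z : ℝ) : ℝ :=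
  ∫ t in Set.Ioi (0 : ℝ), Real.exp (-z * Real.cosh t) * Real.cosh ((j : ℝ) * t)

/-!
Both eigenvalues are nonnegative, so their difference is at most the larger of their upper
bounds. Since `K₀ ≥ 0`, `λ^{δ,t} ≤ 4π / (2 log δ - 1)`. For `λᵗ`, integrating by parts against
`d/dt tanh (t/2) = 1 / (1 + cosh t)` gives
`z (K₁ - K₀) = ∫₀^∞ e^{-z cosh t} / (1 + cosh t) dt ≤ K₀ / 2`, i.e. `1 ≤ K₁/K₀ ≤ 1 + 1/(2z)`.
On this range of the ratio the denominator of `λᵗ` is positive and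
`2z K₁² ≤ (1 + 2z)(2K₀K₁ + z(K₀² - K₁²))`, which is `λᵗ ≤ 2π(1 + 2z)`.
-/

open MeasureTheory Set Filter Topology

section BesselK

variable {z : ℝ}

lemma besselK_zero_eq (z : ℝ) : besselK 0 z = ∫ t in Ioi (0 : ℝ), exp (-z * cosh t) := by
  simp [besselK]

lemma besselK_one_eq (z : ℝ) :
    besselK 1 z = ∫ t in Ioi (0 : ℝ), exp (-z * cosh t) * cosh t := by
  simp [besselK]

lemma besselK_nonneg (j : ℕ) (z : ℝ) : 0 ≤ besselK j z :=
  setIntegral_nonneg measurableSet_Ioi fun _ _ => mul_nonneg (exp_pos _).le (cosh_pos _).le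

/-- From `w ≤ 2 exp (w / 2)` with `w = z cosh t`, and `cosh t ≥ exp t / 2 ≥ t / 2`. -/
lemma exp_neg_mul_cosh_mul_cosh_le (hz : 0 < z) (t : ℝ) :
    exp (-z * cosh t) * cosh t ≤ 2 / z * exp (-(z / 4) * t) := by
  have hw : z * cosh t ≤ 2 * exp (z * cosh t / 2) := by
    linarith [add_one_le_exp (z * cosh t / 2)]
  have hcosh : t / 2 ≤ cosh t := by
    rw [cosh_eq]; linarith [add_one_le_exp t, exp_pos (-t)]
  calc exp (-z * cosh t) * cosh t = z * cosh t * exp (-z * cosh t) / z := by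
        field_simp
    _ ≤ 2 * exp (z * cosh t / 2) * exp (-z * cosh t) / z := by gcongr
    _ = 2 / z * exp (-(z * cosh t / 2)) := by
        rw [mul_assoc, ← exp_add]; ring_nf
    _ ≤ 2 / z * exp (-(z / 4) * t) := by
        gcongr; nlinarith

lemma integrableOn_exp_neg_mul_cosh_mul_cosh (hz : 0 < z) :
    IntegrableOn (fun t => exp (-z * cosh t) * cosh t) (Ioi 0) := by
  refine ((exp_neg_integrableOn_Ioi 0 (by positivity : 0 < z / 4)).const_mul (2 / z)).mono'
    (by fun_prop) (Eventually.of_forall fun t => ?_)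
  rw [norm_of_nonneg (by positivity)]
  exact exp_neg_mul_cosh_mul_cosh_le hz t

lemma integrableOn_exp_neg_mul_cosh (hz : 0 < z) :
    IntegrableOn (fun t => exp (-z * cosh t)) (Ioi 0) :=
  (integrableOn_exp_neg_mul_cosh_mul_cosh hz).mono' (by fun_prop) <|
    Eventually.of_forall fun t => by
      rw [norm_of_nonneg (exp_pos _).le]
      exact le_mul_of_one_le_right (exp_pos _).le (one_le_cosh t)

lemma besselK_zero_pos (hz : 0 < z) : 0 < besselK 0 z := by
  rw [besselK_zero_eq, setIntegral_pos_iff_support_of_nonneg_ae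
    (Eventually.of_forall fun _ => (exp_pos _).le) (integrableOn_exp_neg_mul_cosh hz)]
  simp [Function.support, exp_ne_zero]

lemma besselK_zero_le_besselK_one (hz : 0 < z) : besselK 0 z ≤ besselK 1 z := by
  rw [besselK_zero_eq, besselK_one_eq]
  exact setIntegral_mono_on (integrableOn_exp_neg_mul_cosh hz)
    (integrableOn_exp_neg_mul_cosh_mul_cosh hz) measurableSet_Ioi
    fun t _ => le_mul_of_one_le_right (exp_pos _).le (one_le_cosh t)

/-- `sinh t / (1 + cosh t) = tanh (t / 2)` has derivative `1 / (1 + cosh t)`, and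
`sinh t * tanh (t / 2) = cosh t - 1`. -/
lemma hasDerivAt_exp_neg_mul_cosh_mul_sinh_div (z t : ℝ) :
    HasDerivAt (fun t => exp (-z * cosh t) * (sinh t / (1 + cosh t)))
      (exp (-z * cosh t) * (1 / (1 + cosh t)) -
        z * (exp (-z * cosh t) * cosh t - exp (-z * cosh t))) t := by
  have hc : 0 < 1 + cosh t := by linarith [cosh_pos t]
  have h := (((hasDerivAt_cosh t).const_mul (-z)).exp).mul
    ((hasDerivAt_sinh t).div ((hasDerivAt_cosh t).const_add 1) hc.ne')
  refine h.congr_deriv ?_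
  simp only [Pi.div_apply]
  field_simp
  linear_combination (-(z * (1 + cosh t)) - 1) * sinh_sq t

lemma tendsto_exp_neg_mul_cosh_mul_sinh_div (hz : 0 < z) :
    Tendsto (fun t => exp (-z * cosh t) * (sinh t / (1 + cosh t))) atTop (𝓝 0) := by
  refine squeeze_zero_norm' (a := fun t => 2 / z * exp (-(z / 4) * t)) ?_ ?_
  · filter_upwards [eventually_ge_atTop 0] with t ht
    have hs : |sinh t| ≤ 1 + cosh t := by
      rw [abs_sinh, abs_of_nonneg ht]; linarith [sinh_lt_cosh t]
    rw [norm_mul, norm_of_nonneg (exp_pos _).le, norm_div,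
      norm_of_nonneg (by positivity : 0 ≤ 1 + cosh t)]
    calc exp (-z * cosh t) * (|sinh t| / (1 + cosh t)) ≤ exp (-z * cosh t) * cosh t := by
          gcongr
          exact ((div_le_one (by positivity)).2 hs).trans (one_le_cosh t)
      _ ≤ _ := exp_neg_mul_cosh_mul_cosh_le hz t
  · simpa [neg_mul] using (tendsto_exp_neg_atTop_nhds_zero.comp
      (tendsto_id.const_mul_atTop (by positivity : 0 < z / 4))).const_mul (2 / z)

lemma integrableOn_exp_neg_mul_cosh_mul_one_div (hz : 0 < z) :
    IntegrableOn (fun t => exp (-z * cosh t) * (1 / (1 + cosh t))) (Ioi 0) :=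
  (integrableOn_exp_neg_mul_cosh hz).mono' (by fun_prop) <| Eventually.of_forall fun t => by
    have hc : 1 ≤ 1 + cosh t := by linarith [cosh_pos t]
    rw [norm_of_nonneg (by positivity)]
    exact mul_le_of_le_one_right (exp_pos _).le ((div_le_one (by positivity)).2 hc)

lemma mul_besselK_one_sub_besselK_zero (hz : 0 < z) :
    z * (besselK 1 z - besselK 0 z) =
      ∫ t in Ioi (0 : ℝ), exp (-z * cosh t) * (1 / (1 + cosh t)) := by
  have hI0 := integrableOn_exp_neg_mul_cosh hz
  have hI1 := integrableOn_exp_neg_mul_cosh_mul_cosh hz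
  have hI : IntegrableOn (fun t => exp (-z * cosh t) * cosh t - exp (-z * cosh t)) (Ioi 0) :=
    hI1.sub hI0
  have hFTC := integral_Ioi_of_hasDerivAt_of_tendsto'
    (fun t _ => hasDerivAt_exp_neg_mul_cosh_mul_sinh_div z t)
    ((integrableOn_exp_neg_mul_cosh_mul_one_div hz).sub (hI.const_mul z))
    (tendsto_exp_neg_mul_cosh_mul_sinh_div hz)
  rw [integral_sub (integrableOn_exp_neg_mul_cosh_mul_one_div hz) (hI.const_mul z),
    integral_const_mul, integral_sub hI1 hI0] at hFTC
  rw [besselK_zero_eq, besselK_one_eq]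
  simp only [cosh_zero, sinh_zero, zero_div, mul_zero, sub_zero] at hFTC
  linarith

lemma two_mul_mul_besselK_one_sub_besselK_zero_le (hz : 0 < z) :
    2 * z * (besselK 1 z - besselK 0 z) ≤ besselK 0 z := by
  have h : ∫ t in Ioi (0 : ℝ), exp (-z * cosh t) * (1 / (1 + cosh t)) ≤
      ∫ t in Ioi (0 : ℝ), exp (-z * cosh t) * (1 / 2) :=
    setIntegral_mono_on (integrableOn_exp_neg_mul_cosh_mul_one_div hz)
      ((integrableOn_exp_neg_mul_cosh hz).mul_const _) measurableSet_Ioi fun t _ => by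
        gcongr; linarith [one_le_cosh t]
  rw [integral_mul_const, ← besselK_zero_eq, ← mul_besselK_one_sub_besselK_zero hz] at h
  linarith

end BesselK

section TangentialEigenvalue

variable {x y z : ℝ}

lemma tangential_denom_pos (hx : 0 < x) (hxy : x ≤ y) (h : 2 * z * (y - x) ≤ x) :
    0 < 2 * x * y + z * (x ^ 2 - y ^ 2) := by
  nlinarith [mul_nonneg (sub_nonneg.2 hxy) (sub_nonneg.2 h)]

lemma two_mul_sq_le_tangential_denom (hz : 0 < z) (hx : 0 < x) (hxy : x ≤ y)
    (h : 2 * z * (y - x) ≤ x) :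
    2 * z * y ^ 2 ≤ (1 + 2 * z) * (2 * x * y + z * (x ^ 2 - y ^ 2)) := by
  nlinarith [mul_nonneg (sub_nonneg.2 hxy) (sub_nonneg.2 h), mul_pos hx hz,
    mul_pos (mul_pos hx hz) hz, mul_nonneg (mul_nonneg hx.le hz.le) (sub_nonneg.2 hxy)]

end TangentialEigenvalue

noncomputable def stokesTangentialEigenvalue (z : ℝ) : ℝ :=
  4 * π * z * besselK 1 z ^ 2 /
    (2 * besselK 0 z * besselK 1 z + z * (besselK 0 z ^ 2 - besselK 1 z ^ 2))

noncomputable def deltaRegTangentialEigenvalue (δ z : ℝ) : ℝ :=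
  4 * π / (-1 + 2 * log δ + 2 * besselK 0 z)

lemma stokesTangentialEigenvalue_mem_Icc {z : ℝ} (hz : 0 < z) :
    stokesTangentialEigenvalue z ∈ Icc 0 (2 * π * (1 + 2 * z)) := by
  have hK0 := besselK_zero_pos hz
  have hK01 := besselK_zero_le_besselK_one hz
  have hK := two_mul_mul_besselK_one_sub_besselK_zero_le hz
  have hD := tangential_denom_pos hK0 hK01 hK
  refine ⟨by unfold stokesTangentialEigenvalue; positivity, ?_⟩
  rw [stokesTangentialEigenvalue, div_le_iff₀ hD]
  nlinarith [two_mul_sq_le_tangential_denom hz hK0 hK01 hK, pi_pos]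

lemma deltaRegTangentialEigenvalue_mem_Icc {δ : ℝ} (hδ : 1 / 2 < log δ) (z : ℝ) :
    deltaRegTangentialEigenvalue δ z ∈ Icc 0 (4 * π / (-1 + 2 * log δ)) := by
  have hK0 := besselK_nonneg 0 z
  refine ⟨div_nonneg (by positivity) (by linarith), ?_⟩
  exact div_le_div_of_nonneg_left (by positivity) (by linarith) (by linarith)

theorem delta_reg_stokes_tangential_eigenvalue_difference (δ : ℝ)
    (hδ : Real.sqrt (Real.exp 1) < δ) (ε : ℝ) (hε : 0 < ε) (k : ℕ) (hk : 1 ≤ k) :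
    |4 * π ^ 2 * ε * (k : ℝ) * (besselK 1 (π * ε * (k : ℝ))) ^ 2 /
          (2 * besselK 0 (π * ε * (k : ℝ)) * besselK 1 (π * ε * (k : ℝ)) +
            π * ε * (k : ℝ) *
              ((besselK 0 (π * ε * (k : ℝ))) ^ 2 - (besselK 1 (π * ε * (k : ℝ))) ^ 2)) -
        4 * π / (-1 + 2 * Real.log δ + 2 * besselK 0 (δ * π * ε * (k : ℝ)))| ≤
      4 * π * (1 / 2 + 1 / (-1 + 2 * Real.log δ) + π * ε * (k : ℝ)) := by
  have hz : 0 < π * ε * k := by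
    have : (0 : ℝ) < k := Nat.cast_pos.2 hk
    positivity
  have hlog : 1 / 2 < log δ := by
    calc (1 : ℝ) / 2 = log (sqrt (exp 1)) := by rw [log_sqrt (exp_pos 1).le, log_exp]
      _ < log δ := log_lt_log (sqrt_pos.2 (exp_pos 1)) hδ
  have hq : 0 < 4 * π / (-1 + 2 * log δ) := by
    have : 0 < -1 + 2 * log δ := by linarith
    positivity
  obtain ⟨hA0, hA⟩ := stokesTangentialEigenvalue_mem_Icc hz
  obtain ⟨hB0, hB⟩ := deltaRegTangentialEigenvalue_mem_Icc hlog (δ * π * ε * k)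
  have hA' : 4 * π ^ 2 * ε * k * besselK 1 (π * ε * k) ^ 2 /
      (2 * besselK 0 (π * ε * k) * besselK 1 (π * ε * k) +
        π * ε * k * (besselK 0 (π * ε * k) ^ 2 - besselK 1 (π * ε * k) ^ 2)) =
      stokesTangentialEigenvalue (π * ε * k) := by
    rw [stokesTangentialEigenvalue]; ring
  rw [hA', ← deltaRegTangentialEigenvalue]
  have hsplit : 4 * π * (1 / 2 + 1 / (-1 + 2 * log δ) + π * ε * k) =
      2 * π * (1 + 2 * (π * ε * k)) + 4 * π / (-1 + 2 * log δ) := by ring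
  rw [hsplit]
  exact abs_sub_le_of_nonneg_of_le hA0 (hA.trans (le_add_of_nonneg_right hq.le)) hB0
    (hB.trans (le_add_of_nonneg_left (by positivity)))
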